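/- arXiv:1812.06132 — 3 statements merged into one kernel-verified Lean document; each statement's English description precedes it below -/
import Mathlib

section
/- Let x : [0,1] → ℝ^n be continuously differentiable. Then for every N ∈ ℕ, N ≥ 1, and every t ∈ [0,1], the derivative of the Bernstein approximation satisfies ‖(B_N x)′(t) − x′(t)‖ ≤ (9n/4) · W_{x′}(N^{−1/2}), where W_{x′} is the modulus of continuity of the derivative x′. -/
/-!
For `N = M + 1`, `(B_N x)'(t)` is the convex combination, with weights `b_{j,M}(t)`, of the slopes
of `x` over the cells `[j/N, (j+1)/N]`. By the mean value inequality each slope lies within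
`sup_u ‖x'(u) - x'(t)‖`, `u` ranging over the cell, of `x'(t)`; chaining steps of length
`δ = N^{-1/2}` gives `‖x'(u) - x'(t)‖ ≤ (1 + (u - t)²/δ²) W(δ)`. Bounding `(u - t)²` through the
midpoint of the cell and averaging with the variance identity of the Bernstein basis yields
`‖(B_N x)'(t) - x'(t)‖ ≤ 2 W(δ)`, which is at most `(9n/4) W(δ)` once `n ≥ 1`.
-/

open scoped BigOperators

/-- The Bernstein basis polynomial `b_{j,N}(t) = C(N,j) t^j (1-t)^(N-j)`. -/
noncomputable def bern (N j : ℕ) (t : ℝ) : ℝ :=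
  (N.choose j : ℝ) * t ^ j * (1 - t) ^ (N - j)

/-- The modulus of continuity on `[0,1]` of a function `g`. -/
noncomputable def modCont {E : Type*} [NormedAddCommGroup E] (g : ℝ → E) (δ : ℝ) : ℝ :=
  sSup {d : ℝ | ∃ s t : ℝ, s ∈ Set.Icc (0:ℝ) 1 ∧ t ∈ Set.Icc (0:ℝ) 1 ∧
    |s - t| ≤ δ ∧ d = ‖g s - g t‖}

/-- The `N`-th Bernstein approximation of `g : [0,1] → E`. -/
noncomputable def bapprox {E : Type*} [AddCommMonoid E] [Module ℝ E]
    (N : ℕ) (g : ℝ → E) (t : ℝ) : E :=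
  ∑ j : Fin (N + 1), bern N (j : ℕ) t • g (((j : ℕ) : ℝ) / (N : ℝ))

open Finset Polynomial

section BernsteinBasis

lemma bern_eq_eval (N j : ℕ) (t : ℝ) : bern N j t = (bernsteinPolynomial ℝ N j).eval t := by
  simp [bern, bernsteinPolynomial]

lemma bern_nonneg {t : ℝ} (ht : t ∈ Set.Icc (0 : ℝ) 1) (N j : ℕ) : 0 ≤ bern N j t :=
  mul_nonneg (mul_nonneg (Nat.cast_nonneg _) (pow_nonneg ht.1 _))
    (pow_nonneg (sub_nonneg.2 ht.2) _)

lemma bern_eq_zero_of_lt {N j : ℕ} (h : N < j) (t : ℝ) : bern N j t = 0 := by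
  simp [bern, Nat.choose_eq_zero_of_lt h]

lemma sum_bern (N : ℕ) (t : ℝ) : ∑ j ∈ range (N + 1), bern N j t = 1 := by
  simpa [bern_eq_eval, eval_finsetSum] using congrArg (eval t) (bernsteinPolynomial.sum ℝ N)

lemma sum_mul_bern (N : ℕ) (t : ℝ) : ∑ j ∈ range (N + 1), (j : ℝ) * bern N j t = N * t := by
  simpa [bern_eq_eval, eval_finsetSum, nsmul_eq_mul] using
    congrArg (eval t) (bernsteinPolynomial.sum_smul ℝ N)

lemma sum_sq_sub_mul_bern (N : ℕ) (t : ℝ) :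
    ∑ j ∈ range (N + 1), ((N : ℝ) * t - j) ^ 2 * bern N j t = N * t * (1 - t) := by
  simpa [bern_eq_eval, eval_finsetSum, nsmul_eq_mul] using
    congrArg (eval t) (bernsteinPolynomial.variance ℝ N)

lemma sum_sq_midpoint_sub_mul_bern (M : ℕ) (t : ℝ) :
    ∑ j ∈ range (M + 1), (((j : ℝ) + 1 / 2) / (M + 1) - t) ^ 2 * bern M j t
      = ((M : ℝ) * t * (1 - t) + (1 / 2 - t) ^ 2) / (M + 1) ^ 2 := by
  have expand : ∀ j ∈ range (M + 1), (((j : ℝ) + 1 / 2) / (M + 1) - t) ^ 2 * bern M j t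
      = (((M : ℝ) * t - j) ^ 2 * bern M j t + (1 - 2 * t) * (j * bern M j t)
          + ((2 * t - 1) * (M * t) + (1 / 2 - t) ^ 2) * bern M j t) / (M + 1) ^ 2 := by
    intro j _
    field_simp
    ring
  rw [sum_congr rfl expand, ← sum_div, sum_add_distrib, sum_add_distrib, ← mul_sum, ← mul_sum,
    sum_sq_sub_mul_bern, sum_mul_bern, sum_bern]
  ring

lemma sum_sq_midpoint_sub_mul_bern_le {t : ℝ} (ht : t ∈ Set.Icc (0 : ℝ) 1) (M : ℕ) :
    ∑ j ∈ range (M + 1), (((j : ℝ) + 1 / 2) / (M + 1) - t) ^ 2 * bern M j t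
      ≤ 1 / (4 * ((M : ℝ) + 1)) := by
  rw [sum_sq_midpoint_sub_mul_bern, div_le_div_iff₀ (by positivity) (by positivity)]
  have h : (M : ℝ) * (t * (1 - t)) ≤ M * (1 / 4) :=
    mul_le_mul_of_nonneg_left (by nlinarith [sq_nonneg (t - 1 / 2)]) (Nat.cast_nonneg M)
  nlinarith [ht.1, ht.2, sq_nonneg (t - 1 / 2), Nat.cast_nonneg (α := ℝ) M]

lemma hasDerivAt_bern (N j : ℕ) (t : ℝ) :
    HasDerivAt (bern N j) ((derivative (bernsteinPolynomial ℝ N j)).eval t) t := by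
  simpa only [← funext (bern_eq_eval N j)] using (bernsteinPolynomial ℝ N j).hasDerivAt t

lemma sum_derivative_bern_smul {E : Type*} [AddCommGroup E] [Module ℝ E] (M : ℕ) (t : ℝ)
    (v : ℕ → E) :
    ∑ j ∈ range (M + 2), (derivative (bernsteinPolynomial ℝ (M + 1) j)).eval t • v j
      = ((M : ℝ) + 1) • ∑ j ∈ range (M + 1), bern M j t • (v (j + 1) - v j) := by
  have shift : ∑ j ∈ range (M + 1), bern M (j + 1) t • v (j + 1)
      = ∑ j ∈ range (M + 1), bern M j t • v j - bern M 0 t • v 0 := by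
    rw [sum_range_succ, bern_eq_zero_of_lt (Nat.lt_succ_self M), zero_smul, add_zero,
      sum_range_succ' (fun j => bern M j t • v j), add_sub_cancel_right]
  rw [sum_range_succ']
  simp only [bernsteinPolynomial.derivative_succ, bernsteinPolynomial.derivative_zero, eval_mul,
    eval_sub, eval_neg, eval_natCast, ← bern_eq_eval, mul_smul, sub_smul, smul_sub, ← smul_sum,
    sum_sub_distrib, shift, Nat.add_sub_cancel]
  push_cast
  simp only [neg_smul]
  abel

end BernsteinBasis

section BernsteinApproximation

variable {E : Type*} [NormedAddCommGroup E] [NormedSpace ℝ E]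

lemma hasDerivAt_bapprox (N : ℕ) (g : ℝ → E) (t : ℝ) :
    HasDerivAt (bapprox N g)
      (∑ j ∈ range (N + 1), (derivative (bernsteinPolynomial ℝ N j)).eval t • g (j / N)) t := by
  have h : bapprox N g = fun s => ∑ j ∈ range (N + 1), bern N j s • g (j / N) := by
    funext s
    exact Fin.sum_univ_eq_sum_range (fun j => bern N j s • g (j / N)) (N + 1)
  rw [h]
  exact HasDerivAt.fun_sum fun j _ => (hasDerivAt_bern N j t).smul_const _

lemma deriv_bapprox_succ (M : ℕ) (g : ℝ → E) (t : ℝ) :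
    deriv (bapprox (M + 1) g) t
      = ∑ j ∈ range (M + 1), bern M j t • slope g (j / (M + 1)) ((j + 1) / (M + 1)) := by
  have hstep : ∀ j : ℕ, ((j : ℝ) + 1) / (M + 1) - j / (M + 1) = ((M : ℝ) + 1)⁻¹ := fun j => by
    field_simp
    ring
  rw [(hasDerivAt_bapprox (M + 1) g t).deriv, sum_derivative_bern_smul, smul_sum]
  refine sum_congr rfl fun j _ => ?_
  rw [slope_def_module, hstep, inv_inv, smul_comm]
  push_cast
  rfl

end BernsteinApproximation

section ModulusOfContinuity

variable {E : Type*} [NormedAddCommGroup E] {g : ℝ → E} {δ : ℝ}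

lemma norm_sub_le_modCont (hg : ContinuousOn g (Set.Icc 0 1)) {s u : ℝ}
    (hs : s ∈ Set.Icc (0 : ℝ) 1) (hu : u ∈ Set.Icc (0 : ℝ) 1) (h : |s - u| ≤ δ) :
    ‖g s - g u‖ ≤ modCont g δ := by
  obtain ⟨C, hC⟩ := isCompact_Icc.exists_bound_of_continuousOn hg
  refine le_csSup ⟨C + C, ?_⟩ ⟨s, u, hs, hu, h, rfl⟩
  rintro _ ⟨s, u, hs, hu, -, rfl⟩
  exact (norm_sub_le _ _).trans (add_le_add (hC s hs) (hC u hu))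

lemma modCont_nonneg (hg : ContinuousOn g (Set.Icc 0 1)) (hδ : 0 ≤ δ) : 0 ≤ modCont g δ := by
  have h0 : (0 : ℝ) ∈ Set.Icc (0 : ℝ) 1 := ⟨le_rfl, zero_le_one⟩
  simpa using norm_sub_le_modCont hg h0 h0 (by simpa using hδ)

lemma norm_sub_le_nat_mul_modCont (hg : ContinuousOn g (Set.Icc 0 1)) (k : ℕ) {s u : ℝ}
    (hs : s ∈ Set.Icc (0 : ℝ) 1) (hu : u ∈ Set.Icc (0 : ℝ) 1) (h : |s - u| ≤ k * δ) :
    ‖g s - g u‖ ≤ k * modCont g δ := by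
  induction k generalizing s with
  | zero =>
    rw [Nat.cast_zero, zero_mul, abs_nonpos_iff, sub_eq_zero] at h
    simp [h]
  | succ k ih =>
    have hk : (0 : ℝ) < k + 1 := by positivity
    set p := s + (k + 1 : ℝ)⁻¹ • (u - s)
    have hp : p ∈ Set.Icc (0 : ℝ) 1 :=
      (convex_Icc 0 1).add_smul_sub_mem hs hu ⟨by positivity, inv_le_one_of_one_le₀ (by simp)⟩
    have hsp : |s - p| ≤ δ := by
      rw [show s - p = (u - s) / -(k + 1) by simp only [p, smul_eq_mul]; field_simp; ring,
        abs_div, abs_neg, abs_of_pos hk, abs_sub_comm, div_le_iff₀ hk]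
      push_cast at h
      linarith
    have hpu : |p - u| ≤ k * δ := by
      rw [show p - u = (s - u) * k / (k + 1) by simp only [p, smul_eq_mul]; field_simp; ring,
        abs_div, abs_mul, abs_of_pos hk, Nat.abs_cast, div_le_iff₀ hk]
      push_cast at h
      nlinarith [Nat.cast_nonneg (α := ℝ) k]
    calc ‖g s - g u‖ ≤ ‖g s - g p‖ + ‖g p - g u‖ := norm_sub_le_norm_sub_add_norm_sub _ _ _
      _ ≤ modCont g δ + k * modCont g δ :=
        add_le_add (norm_sub_le_modCont hg hs hp hsp) (ih hp hpu)
      _ = (k + 1 : ℕ) * modCont g δ := by push_cast; ring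

lemma norm_sub_le_one_add_sq_div_sq_mul_modCont (hg : ContinuousOn g (Set.Icc 0 1))
    (hδ : 0 < δ) {s u : ℝ} (hs : s ∈ Set.Icc (0 : ℝ) 1) (hu : u ∈ Set.Icc (0 : ℝ) 1) :
    ‖g s - g u‖ ≤ (1 + (s - u) ^ 2 / δ ^ 2) * modCont g δ := by
  set r := |s - u| / δ
  have hr : (s - u) ^ 2 / δ ^ 2 = r ^ 2 := by rw [div_pow, sq_abs]
  have hceil : (⌈r⌉₊ : ℝ) ≤ 1 + r ^ 2 := by
    rcases le_or_gt r 1 with hr1 | hr1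
    · have : ⌈r⌉₊ ≤ 1 := Nat.ceil_le.2 (by simpa using hr1)
      have : (⌈r⌉₊ : ℝ) ≤ 1 := by exact_mod_cast this
      nlinarith
    · nlinarith [Nat.ceil_lt_add_one (by positivity : 0 ≤ r)]
  have hdist : |s - u| ≤ ⌈r⌉₊ * δ := (div_le_iff₀ hδ).1 (Nat.le_ceil r)
  calc ‖g s - g u‖ ≤ ⌈r⌉₊ * modCont g δ := norm_sub_le_nat_mul_modCont hg _ hs hu hdist
    _ ≤ (1 + (s - u) ^ 2 / δ ^ 2) * modCont g δ := by
      rw [hr]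
      exact mul_le_mul_of_nonneg_right hceil (modCont_nonneg hg hδ.le)

end ModulusOfContinuity

lemma norm_slope_sub_le {E : Type*} [NormedAddCommGroup E] [NormedSpace ℝ E] {f f' : ℝ → E}
    {a b C : ℝ} (y : E) (hab : a < b)
    (hf : ∀ u ∈ Set.Icc a b, HasDerivWithinAt f (f' u) (Set.Icc a b) u)
    (hC : ∀ u ∈ Set.Ico a b, ‖f' u - y‖ ≤ C) :
    ‖slope f a b - y‖ ≤ C := by
  have hba : 0 < b - a := sub_pos.2 hab
  have h := norm_image_sub_le_of_norm_deriv_le_segment' (f := fun u => f u - u • y)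
    (fun u hu => by simpa using (hf u hu).fun_sub ((hasDerivWithinAt_id u _).smul_const y)) hC
    b ⟨hab.le, le_rfl⟩
  have hdiff : f b - b • y - (f a - a • y) = (b - a) • (slope f a b - y) := by
    rw [slope_def_module, smul_sub, smul_inv_smul₀ hba.ne', sub_smul]
    abel
  rwa [hdiff, norm_smul, Real.norm_of_nonneg hba.le, mul_comm, mul_le_mul_iff_left₀ hba] at h

section Derivative

variable {E : Type*} [NormedAddCommGroup E] [NormedSpace ℝ E] {x x' : ℝ → E}

lemma norm_slope_sub_le_modCont
    (hx : ∀ t ∈ Set.Icc (0 : ℝ) 1, HasDerivWithinAt x (x' t) (Set.Icc (0 : ℝ) 1) t)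
    (hx' : ContinuousOn x' (Set.Icc (0 : ℝ) 1)) {δ a b t : ℝ} (hδ : 0 < δ) (ha : 0 ≤ a)
    (hab : a < b) (hb : b ≤ 1) (ht : t ∈ Set.Icc (0 : ℝ) 1) :
    ‖slope x a b - x' t‖
      ≤ (1 + ((b - a) ^ 2 / 2 + 2 * ((a + b) / 2 - t) ^ 2) / δ ^ 2) * modCont x' δ := by
  have hsub : Set.Icc a b ⊆ Set.Icc 0 1 := Set.Icc_subset_Icc ha hb
  refine norm_slope_sub_le _ hab (fun u hu => (hx u (hsub hu)).mono hsub) fun u hu => ?_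
  have hu := Set.Ico_subset_Icc_self hu
  refine (norm_sub_le_one_add_sq_div_sq_mul_modCont hx' hδ (hsub hu) ht).trans ?_
  gcongr
  · exact modCont_nonneg hx' hδ.le
  · nlinarith [hu.1, hu.2, sq_nonneg (u + t - a - b)]

lemma norm_deriv_bapprox_sub_le
    (hx : ∀ t ∈ Set.Icc (0 : ℝ) 1, HasDerivWithinAt x (x' t) (Set.Icc (0 : ℝ) 1) t)
    (hx' : ContinuousOn x' (Set.Icc (0 : ℝ) 1)) (M : ℕ) {δ t : ℝ} (hδ : 0 < δ)
    (hδM : ((M : ℝ) + 1) * δ ^ 2 = 1) (ht : t ∈ Set.Icc (0 : ℝ) 1) :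
    ‖deriv (bapprox (M + 1) x) t - x' t‖ ≤ 2 * modCont x' δ := by
  have hM : (0 : ℝ) < M + 1 := by positivity
  have hδ2 : δ ^ 2 = ((M : ℝ) + 1)⁻¹ := eq_inv_of_mul_eq_one_right hδM
  have hW := modCont_nonneg hx' hδ.le
  set A : ℝ := 1 + 1 / (2 * (M + 1))
  set d : ℕ → ℝ := fun j => (((j : ℝ) + 1 / 2) / (M + 1) - t) ^ 2
  have hcell : ∀ j ∈ range (M + 1), ‖slope x (j / (M + 1)) ((j + 1) / (M + 1)) - x' t‖
      ≤ (A + 2 * (M + 1) * d j) * modCont x' δ := by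
    intro j hj
    have hjM : (j : ℝ) + 1 ≤ M + 1 := by exact_mod_cast mem_range.1 hj
    convert norm_slope_sub_le_modCont hx hx' hδ (by positivity)
      (div_lt_div_of_pos_right (lt_add_one _) hM) ((div_le_one hM).2 hjM) ht using 2
    rw [hδ2]
    simp only [A, d]
    field_simp
    ring
  calc ‖deriv (bapprox (M + 1) x) t - x' t‖
      = ‖∑ j ∈ range (M + 1),
          bern M j t • (slope x (j / (M + 1)) ((j + 1) / (M + 1)) - x' t)‖ := by
        simp only [deriv_bapprox_succ, smul_sub, sum_sub_distrib, ← sum_smul, sum_bern, one_smul]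
    _ ≤ ∑ j ∈ range (M + 1),
          (A * bern M j t + 2 * (M + 1) * (d j * bern M j t)) * modCont x' δ := by
        refine (norm_sum_le _ _).trans (sum_le_sum fun j hj => ?_)
        rw [norm_smul, Real.norm_of_nonneg (bern_nonneg ht M j)]
        linarith [mul_le_mul_of_nonneg_left (hcell j hj) (bern_nonneg ht M j)]
    _ = (A + 2 * (M + 1) * ∑ j ∈ range (M + 1), d j * bern M j t) * modCont x' δ := by
        rw [← sum_mul, sum_add_distrib, ← mul_sum, ← mul_sum, sum_bern, mul_one]
    _ ≤ 2 * modCont x' δ := by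
        have hA : A ≤ 3 / 2 := by
          have : 1 / (2 * ((M : ℝ) + 1)) ≤ 1 / 2 := by
            rw [div_le_div_iff₀ (by positivity) two_pos]
            linarith
          linarith
        have hd : 2 * (M + 1) * ∑ j ∈ range (M + 1), d j * bern M j t ≤ 1 / 2 := by
          calc 2 * (M + 1) * ∑ j ∈ range (M + 1), d j * bern M j t
              ≤ 2 * (M + 1) * (1 / (4 * (M + 1))) :=
                mul_le_mul_of_nonneg_left (sum_sq_midpoint_sub_mul_bern_le ht M) (by positivity)
            _ = 1 / 2 := by field_simp; ring
        exact mul_le_mul_of_nonneg_right (by linarith) hW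

end Derivative

/-- rate of convergence of the derivative of the Bernstein approximation
of a continuously differentiable function `x : [0,1] → ℝ^n` with derivative `x'`. -/
theorem bernstein_approx_deriv_uniform_bound (n : ℕ)
    (x x' : ℝ → EuclideanSpace ℝ (Fin n))
    (hx : ∀ t ∈ Set.Icc (0:ℝ) 1, HasDerivWithinAt x (x' t) (Set.Icc (0:ℝ) 1) t)
    (hx' : ContinuousOn x' (Set.Icc (0:ℝ) 1))
    (N : ℕ) (hN : 1 ≤ N) (t : ℝ) (ht : t ∈ Set.Icc (0:ℝ) 1) :
    ‖deriv (bapprox N x) t - x' t‖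
      ≤ (9 * (n : ℝ) / 4) * modCont x' ((N : ℝ) ^ (-(1/2 : ℝ))) := by
  obtain ⟨M, rfl⟩ : ∃ M, N = M + 1 := ⟨N - 1, by omega⟩
  obtain rfl | hn := n.eq_zero_or_pos
  · simp [Subsingleton.elim (deriv (bapprox (M + 1) x) t - x' t) 0]
  set δ := ((M + 1 : ℕ) : ℝ) ^ (-(1 / 2 : ℝ))
  have hδ : 0 < δ := by positivity
  have hδM : ((M : ℝ) + 1) * δ ^ 2 = 1 := by
    rw [← Real.rpow_natCast, ← Real.rpow_mul (by positivity),
      show -(1 / 2 : ℝ) * ((2 : ℕ) : ℝ) = -1 by norm_num, Real.rpow_neg_one, Nat.cast_succ,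
      mul_inv_cancel₀ (by positivity)]
  have h2n : (2 : ℝ) ≤ 9 * n / 4 := by
    have : (1 : ℝ) ≤ n := by exact_mod_cast hn
    linarith
  calc ‖deriv (bapprox (M + 1) x) t - x' t‖ ≤ 2 * modCont x' δ :=
        norm_deriv_bapprox_sub_le hx hx' M hδ hδM ht
    _ ≤ 9 * n / 4 * modCont x' δ := mul_le_mul_of_nonneg_right h2n (modCont_nonneg hx' hδ.le)
end

section
/- Limit of relaxed dynamics at dense nodes (Step 1 of Theorem 2): let f : ℝ^{n_x} × ℝ^{n_u} → ℝ^{n_x} be continuous. For each N ∈ ℕ, N ≥ 1, let x_N : [0,1] → ℝ^{n_x} be differentiable and u_N : [0,1] → ℝ^{n_u} be continuous, and suppose x_N → x^∞, x_N′ → v^∞ and u_N → u^∞ uniformly on [0,1], where x^∞ is differentiable with derivative v^∞ and v^∞, u^∞ are continuous. If there are δ_N ≥ 0 with δ_N → 0 such that ‖x_N′(j/N) − f(x_N(j/N), u_N(j/N))‖ ≤ δ_N for all 0 ≤ j ≤ N and all N, then (x^∞)′(t) = f(x^∞(t), u^∞(t)) for all t ∈ [0,1]. -/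
open Filter Set Topology

/-!
Fix `t ∈ [0,1]` and approach it from below by the nodes `⌊tN⌋/N`. Uniform convergence together
with continuity of the limits lets one pass to the limit in `x_N'`, `x_N` and `u_N` along these
nodes, so `x_N'(⌊tN⌋/N) → v^∞(t)` and `f(x_N, u_N)(⌊tN⌋/N) → f(x^∞(t), u^∞(t))`; the two sequences
differ by at most `δ_N → 0`, hence the limits agree.
-/

theorem Nat.floor_mul_le_of_le_one {t : ℝ} (ht : t ≤ 1) (N : ℕ) : ⌊t * N⌋₊ ≤ N :=
  Nat.floor_le_of_le (by nlinarith [N.cast_nonneg (α := ℝ)])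

theorem tendsto_floor_mul_div_nhdsWithin_Icc {t : ℝ} (ht : t ∈ Icc (0 : ℝ) 1) :
    Tendsto (fun N : ℕ => (⌊t * N⌋₊ : ℝ) / N) atTop (𝓝[Icc 0 1] t) := by
  refine tendsto_nhdsWithin_iff.mpr ⟨?_, Eventually.of_forall fun N => ⟨by positivity, ?_⟩⟩
  · exact (tendsto_nat_floor_mul_div_atTop ht.1).comp tendsto_natCast_atTop_atTop
  · exact div_le_one_of_le₀ (by exact_mod_cast Nat.floor_mul_le_of_le_one ht.2 N) N.cast_nonneg

theorem eq_of_tendsto_of_norm_sub_le {ι E : Type*} [NormedAddCommGroup E] {l : Filter ι}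
    [l.NeBot] {a b : ι → E} {x y : E} {δ : ι → ℝ} (ha : Tendsto a l (𝓝 x))
    (hb : Tendsto b l (𝓝 y)) (hδ : Tendsto δ l (𝓝 0)) (hab : ∀ᶠ i in l, ‖a i - b i‖ ≤ δ i) :
    x = y := by
  have hab0 : Tendsto (fun i => a i - b i) l (𝓝 0) := squeeze_zero_norm' hab hδ
  exact sub_eq_zero.mp (tendsto_nhds_unique (ha.sub hb) hab0)

theorem limit_of_relaxed_dynamics_general (nx nu : ℕ)
    (f : EuclideanSpace ℝ (Fin nx) × EuclideanSpace ℝ (Fin nu) → EuclideanSpace ℝ (Fin nx))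
    (hf : Continuous f)
    (xN xN' : ℕ → ℝ → EuclideanSpace ℝ (Fin nx))
    (uN : ℕ → ℝ → EuclideanSpace ℝ (Fin nu))
    (xinf vinf : ℝ → EuclideanSpace ℝ (Fin nx)) (uinf : ℝ → EuclideanSpace ℝ (Fin nu))
    (hux : TendstoUniformlyOn xN xinf Filter.atTop (Set.Icc (0:ℝ) 1))
    (hux' : TendstoUniformlyOn xN' vinf Filter.atTop (Set.Icc (0:ℝ) 1))
    (huu : TendstoUniformlyOn uN uinf Filter.atTop (Set.Icc (0:ℝ) 1))
    (hxinfd : ∀ t ∈ Set.Icc (0:ℝ) 1, HasDerivWithinAt xinf (vinf t) (Set.Icc (0:ℝ) 1) t)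
    (hvinf : ContinuousOn vinf (Set.Icc (0:ℝ) 1))
    (huinf : ContinuousOn uinf (Set.Icc (0:ℝ) 1))
    (δ : ℕ → ℝ) (hδ : Filter.Tendsto δ Filter.atTop (nhds 0))
    (hnodes : ∀ N, 1 ≤ N → ∀ j : ℕ, j ≤ N →
      ‖xN' N ((j : ℝ) / (N : ℝ))
          - f (xN N ((j : ℝ) / (N : ℝ)), uN N ((j : ℝ) / (N : ℝ)))‖ ≤ δ N) :
    ∀ t ∈ Set.Icc (0:ℝ) 1, vinf t = f (xinf t, uinf t) := by
  intro t ht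
  have hnode := tendsto_floor_mul_div_nhdsWithin_Icc ht
  have hv := hux'.tendsto_comp (hvinf.continuousWithinAt ht) hnode
  have hx := hux.tendsto_comp (hxinfd t ht).continuousWithinAt hnode
  have hu := huu.tendsto_comp (huinf.continuousWithinAt ht) hnode
  refine eq_of_tendsto_of_norm_sub_le hv ((hf.tendsto _).comp (hx.prodMk_nhds hu)) hδ ?_
  filter_upwards [eventually_ge_atTop 1] with N hN
  exact hnodes N hN _ (Nat.floor_mul_le_of_le_one ht.2 N)

/-- Step 1 of Theorem 2: if a uniformly convergent sequence of
differentiable functions satisfies the relaxed dynamics at the dense equidistant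
nodes with relaxation bounds `δ_N → 0`, then the limit satisfies the exact
dynamics on all of `[0,1]`. -/
theorem limit_of_relaxed_dynamics (nx nu : ℕ)
    (f : EuclideanSpace ℝ (Fin nx) × EuclideanSpace ℝ (Fin nu) → EuclideanSpace ℝ (Fin nx))
    (hf : Continuous f)
    (xN xN' : ℕ → ℝ → EuclideanSpace ℝ (Fin nx))
    (uN : ℕ → ℝ → EuclideanSpace ℝ (Fin nu))
    (xinf vinf : ℝ → EuclideanSpace ℝ (Fin nx)) (uinf : ℝ → EuclideanSpace ℝ (Fin nu))
    (hxNd : ∀ N, 1 ≤ N → ∀ t ∈ Set.Icc (0:ℝ) 1,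
      HasDerivWithinAt (xN N) (xN' N t) (Set.Icc (0:ℝ) 1) t)
    (huNc : ∀ N, 1 ≤ N → ContinuousOn (uN N) (Set.Icc (0:ℝ) 1))
    (hux : TendstoUniformlyOn xN xinf Filter.atTop (Set.Icc (0:ℝ) 1))
    (hux' : TendstoUniformlyOn xN' vinf Filter.atTop (Set.Icc (0:ℝ) 1))
    (huu : TendstoUniformlyOn uN uinf Filter.atTop (Set.Icc (0:ℝ) 1))
    (hxinfd : ∀ t ∈ Set.Icc (0:ℝ) 1, HasDerivWithinAt xinf (vinf t) (Set.Icc (0:ℝ) 1) t)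
    (hvinf : ContinuousOn vinf (Set.Icc (0:ℝ) 1))
    (huinf : ContinuousOn uinf (Set.Icc (0:ℝ) 1))
    (δ : ℕ → ℝ) (hδ0 : ∀ N, 0 ≤ δ N) (hδ : Filter.Tendsto δ Filter.atTop (nhds 0))
    (hnodes : ∀ N, 1 ≤ N → ∀ j : ℕ, j ≤ N →
      ‖xN' N ((j : ℝ) / (N : ℝ))
          - f (xN N ((j : ℝ) / (N : ℝ)), uN N ((j : ℝ) / (N : ℝ)))‖ ≤ δ N) :
    ∀ t ∈ Set.Icc (0:ℝ) 1, vinf t = f (xinf t, uinf t) :=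
  limit_of_relaxed_dynamics_general nx nu f hf xN xN' uN xinf vinf uinf hux hux' huu hxinfd hvinf
    huinf δ hδ hnodes
end

section
/- Appendix inequality (quadrature of a weighted gradient term): let G : ℝ^{n_x} × ℝ^{n_u} → ℝ^{n_x} be Lipschitz continuous and bounded, and let x : [0,1] → ℝ^{n_x}, u : [0,1] → ℝ^{n_u} be continuous with Bernstein approximations x_N = B_N x, u_N = B_N u. Then there exists a constant C̄ > 0, independent of N, such that for every N ≥ 1, ‖ (1/(N+1)) Σ_{j=0}^N G(x_N(j/N), u_N(j/N)) b_{0,N}(j/N) − ∫_0^1 G(x(t), u(t)) b_{0,N}(t) dt ‖ ≤ C̄ · ( N^{−1/2} + W_x(N^{−1/2}) + W_u(N^{−1/2}) ). -/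
/-!
The weight `b_{0,N}(t) = (1 - t)^N` makes both terms small on their own: its values at the
nodes `j/N` sum to at most `2`, and its integral over `[0,1]` is `1/(N+1)`. Since `G` is
bounded by `M`, the difference is at most `3M/(N+1) ≤ 3M N^{-1/2}`.
-/

open scoped BigOperators

lemma modCont_nonneg_s16 {E : Type*} [NormedAddCommGroup E] (g : ℝ → E) (δ : ℝ) :
    0 ≤ modCont g δ :=
  Real.sSup_nonneg fun _ ⟨_, _, _, _, _, hd⟩ => hd ▸ norm_nonneg _

lemma bern_zero_right (N : ℕ) (t : ℝ) : bern N 0 t = (1 - t) ^ N := by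
  simp [bern]

lemma bern_zero_right_nonneg {N : ℕ} {t : ℝ} (ht : t ≤ 1) : 0 ≤ bern N 0 t := by
  rw [bern_zero_right]
  exact pow_nonneg (sub_nonneg.mpr ht) N

lemma exp_neg_natCast_le_half_pow (j : ℕ) : Real.exp (-j) ≤ (1 / 2) ^ j := by
  have htwo : (2 : ℝ) ≤ Real.exp 1 := by linarith [Real.add_one_le_exp 1]
  rw [Real.exp_neg, ← mul_one (j : ℝ), Real.exp_nat_mul, one_div, inv_pow]
  gcongr

-- `(1 - j/N)^N ≤ e^{-j} ≤ 2^{-j}`, so the node masses are dominated by a geometric series.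
lemma sum_bern_zero_right_nodes_le_two (N : ℕ) :
    ∑ j ∈ Finset.range (N + 1), bern N 0 ((j : ℝ) / N) ≤ 2 := by
  calc ∑ j ∈ Finset.range (N + 1), bern N 0 ((j : ℝ) / N)
      ≤ ∑ j ∈ Finset.range (N + 1), (1 / 2 : ℝ) ^ j := by
        refine Finset.sum_le_sum fun j hj => ?_
        have hjN : (j : ℝ) ≤ N := by exact_mod_cast Finset.mem_range_succ_iff.mp hj
        rw [bern_zero_right]
        exact (Real.one_sub_div_pow_le_exp_neg hjN).trans (exp_neg_natCast_le_half_pow j)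
    _ ≤ 2 := sum_geometric_two_le _

section Quadrature

variable {E : Type*} [NormedAddCommGroup E] [NormedSpace ℝ E]

lemma norm_sum_bern_zero_right_nodes_smul_le (N : ℕ) (v : ℕ → E) {M : ℝ}
    (hv : ∀ j, ‖v j‖ ≤ M) :
    ‖∑ j ∈ Finset.range (N + 1), bern N 0 ((j : ℝ) / N) • v j‖ ≤ 2 * M := by
  have hM : 0 ≤ M := (norm_nonneg _).trans (hv 0)
  calc ‖∑ j ∈ Finset.range (N + 1), bern N 0 ((j : ℝ) / N) • v j‖
      ≤ ∑ j ∈ Finset.range (N + 1), bern N 0 ((j : ℝ) / N) * M := by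
        refine (norm_sum_le _ _).trans (Finset.sum_le_sum fun j hj => ?_)
        have hjN : (j : ℝ) ≤ N := by exact_mod_cast Finset.mem_range_succ_iff.mp hj
        have hb : 0 ≤ bern N 0 ((j : ℝ) / N) :=
          bern_zero_right_nonneg (div_le_one_of_le₀ hjN (Nat.cast_nonneg N))
        rw [norm_smul, Real.norm_of_nonneg hb]
        exact mul_le_mul_of_nonneg_left (hv j) hb
    _ = (∑ j ∈ Finset.range (N + 1), bern N 0 ((j : ℝ) / N)) * M := (Finset.sum_mul ..).symm
    _ ≤ 2 * M := mul_le_mul_of_nonneg_right (sum_bern_zero_right_nodes_le_two N) hM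

lemma integral_bern_zero_right (N : ℕ) : ∫ t in (0 : ℝ)..1, bern N 0 t = ((N : ℝ) + 1)⁻¹ := by
  simp only [bern_zero_right]
  rw [intervalIntegral.integral_comp_sub_left (fun s : ℝ => s ^ N), sub_zero, sub_self,
    integral_pow]
  simp

lemma norm_integral_bern_zero_right_smul_le (N : ℕ) (f : ℝ → E) {M : ℝ}
    (hf : ∀ t, ‖f t‖ ≤ M) :
    ‖∫ t in (0 : ℝ)..1, bern N 0 t • f t‖ ≤ M * ((N : ℝ) + 1)⁻¹ := by
  have hM : 0 ≤ M := (norm_nonneg _).trans (hf 0)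
  have hbound : ∀ᵐ t ∂MeasureTheory.volume.restrict (Set.uIoc (0 : ℝ) 1),
      ‖bern N 0 t • f t‖ ≤ M * bern N 0 t := by
    refine MeasureTheory.ae_restrict_of_forall_mem measurableSet_uIoc fun t ht => ?_
    rw [Set.uIoc_of_le zero_le_one] at ht
    have hb : 0 ≤ bern N 0 t := bern_zero_right_nonneg ht.2
    rw [norm_smul, Real.norm_of_nonneg hb, mul_comm]
    exact mul_le_mul_of_nonneg_right (hf t) hb
  have hint : IntervalIntegrable (fun t => M * bern N 0 t) MeasureTheory.volume 0 1 := by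
    simp only [bern_zero_right]
    exact (by fun_prop : Continuous fun t : ℝ => M * (1 - t) ^ N).intervalIntegrable 0 1
  calc ‖∫ t in (0 : ℝ)..1, bern N 0 t • f t‖
      ≤ |∫ t in (0 : ℝ)..1, M * bern N 0 t| :=
        intervalIntegral.norm_integral_le_abs_of_norm_le hbound hint
    _ = M * ((N : ℝ) + 1)⁻¹ := by
        rw [intervalIntegral.integral_const_mul, integral_bern_zero_right, abs_of_nonneg]
        positivity

lemma norm_bern_zero_right_quadrature_sub_integral_le (N : ℕ) (v : ℕ → E) (f : ℝ → E) {M : ℝ}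
    (hv : ∀ j, ‖v j‖ ≤ M) (hf : ∀ t, ‖f t‖ ≤ M) :
    ‖((N : ℝ) + 1)⁻¹ • (∑ j ∈ Finset.range (N + 1), bern N 0 ((j : ℝ) / N) • v j)
        - ∫ t in (0 : ℝ)..1, bern N 0 t • f t‖ ≤ 3 * M * ((N : ℝ) + 1)⁻¹ := by
  have hsum := norm_sum_bern_zero_right_nodes_smul_le N v hv
  have hint := norm_integral_bern_zero_right_smul_le N f hf
  have hw : 0 ≤ ((N : ℝ) + 1)⁻¹ := by positivity
  calc _ ≤ ((N : ℝ) + 1)⁻¹ * ‖∑ j ∈ Finset.range (N + 1), bern N 0 ((j : ℝ) / N) • v j‖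
          + ‖∫ t in (0 : ℝ)..1, bern N 0 t • f t‖ := by
        grw [norm_sub_le, norm_smul, Real.norm_of_nonneg hw]
    _ ≤ ((N : ℝ) + 1)⁻¹ * (2 * M) + M * ((N : ℝ) + 1)⁻¹ := by gcongr
    _ = 3 * M * ((N : ℝ) + 1)⁻¹ := by ring

end Quadrature

lemma inv_natCast_add_one_le_rpow_neg_half {N : ℕ} (hN : 1 ≤ N) :
    ((N : ℝ) + 1)⁻¹ ≤ (N : ℝ) ^ (-(1 / 2 : ℝ)) := by
  have hN' : (1 : ℝ) ≤ N := by exact_mod_cast hN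
  calc ((N : ℝ) + 1)⁻¹ ≤ (N : ℝ)⁻¹ := inv_anti₀ (by positivity) (by linarith)
    _ = (N : ℝ) ^ (-1 : ℝ) := (Real.rpow_neg_one _).symm
    _ ≤ (N : ℝ) ^ (-(1 / 2 : ℝ)) := Real.rpow_le_rpow_of_exponent_le hN' (by norm_num)

theorem appendix_weighted_quadrature_general (nx nu : ℕ)
    (G : EuclideanSpace ℝ (Fin nx) × EuclideanSpace ℝ (Fin nu) → EuclideanSpace ℝ (Fin nx))
    (M : ℝ) (hM : ∀ p, ‖G p‖ ≤ M)
    (x : ℝ → EuclideanSpace ℝ (Fin nx)) (u : ℝ → EuclideanSpace ℝ (Fin nu)) :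
    ∃ C : ℝ, 0 < C ∧ ∀ N : ℕ, 1 ≤ N →
      ‖((N : ℝ) + 1)⁻¹ •
            (∑ j ∈ Finset.range (N + 1), bern N 0 ((j : ℝ) / (N : ℝ)) •
              G (bapprox N x ((j : ℝ) / (N : ℝ)), bapprox N u ((j : ℝ) / (N : ℝ))))
          - ∫ t in (0:ℝ)..1, bern N 0 t • G (x t, u t)‖
        ≤ C * ((N : ℝ) ^ (-(1/2 : ℝ)) + modCont x ((N : ℝ) ^ (-(1/2 : ℝ)))
            + modCont u ((N : ℝ) ^ (-(1/2 : ℝ)))) := by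
  have hM0 : 0 ≤ M := (norm_nonneg _).trans (hM 0)
  refine ⟨3 * M + 1, by positivity, fun N hN => ?_⟩
  set δ := (N : ℝ) ^ (-(1 / 2 : ℝ))
  have hδ : ((N : ℝ) + 1)⁻¹ ≤ δ := inv_natCast_add_one_le_rpow_neg_half hN
  calc _ ≤ 3 * M * ((N : ℝ) + 1)⁻¹ :=
        norm_bern_zero_right_quadrature_sub_integral_le N
          (fun j => G (bapprox N x (j / N), bapprox N u (j / N))) (fun t => G (x t, u t))
          (fun _ => hM _) (fun _ => hM _)
    _ ≤ (3 * M + 1) * δ := by nlinarith [inv_nonneg.mpr (by positivity : (0 : ℝ) ≤ N + 1)]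
    _ ≤ (3 * M + 1) * (δ + modCont x δ + modCont u δ) := by
        gcongr
        linarith [modCont_nonneg_s16 x δ, modCont_nonneg_s16 u δ]

/-- Appendix inequality: quadrature error of the weighted term
`G(x_N, u_N)·b_{0,N}` against `∫ G(x,u)·b_{0,N}`. -/
theorem appendix_weighted_quadrature (nx nu : ℕ)
    (G : EuclideanSpace ℝ (Fin nx) × EuclideanSpace ℝ (Fin nu) → EuclideanSpace ℝ (Fin nx))
    (K : NNReal) (hG : LipschitzWith K G)
    (M : ℝ) (hM : ∀ p, ‖G p‖ ≤ M)
    (x : ℝ → EuclideanSpace ℝ (Fin nx)) (u : ℝ → EuclideanSpace ℝ (Fin nu))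
    (hx : ContinuousOn x (Set.Icc (0:ℝ) 1)) (hu : ContinuousOn u (Set.Icc (0:ℝ) 1)) :
    ∃ C : ℝ, 0 < C ∧ ∀ N : ℕ, 1 ≤ N →
      ‖((N : ℝ) + 1)⁻¹ •
            (∑ j ∈ Finset.range (N + 1), bern N 0 ((j : ℝ) / (N : ℝ)) •
              G (bapprox N x ((j : ℝ) / (N : ℝ)), bapprox N u ((j : ℝ) / (N : ℝ))))
          - ∫ t in (0:ℝ)..1, bern N 0 t • G (x t, u t)‖
        ≤ C * ((N : ℝ) ^ (-(1/2 : ℝ)) + modCont x ((N : ℝ) ^ (-(1/2 : ℝ)))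
            + modCont u ((N : ℝ) ^ (-(1/2 : ℝ)))) :=
  appendix_weighted_quadrature_general nx nu G M hM x u
end
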